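/- Let N > 1 and d > 0 with d² > (16N²/27)·((8N² − 6)·√(1 − 3/(4N²)) + 8N² − 9). Then the equation φ(z) = 0 has exactly two roots z₀₂ < z₀₃ in the interval I₂ = (1, √(1+d²)); F has a local maximum at z₀₂ and a local minimum at z₀₃, and F(z₀₃) < F(z₀₂) < 0. -/

import Mathlib

/-- `F N d z = (1 - N z)² (1 - d²/(z² - 1))`. -/
noncomputable def F (N d z : ℝ) : ℝ := (1 - N * z) ^ 2 * (1 - d ^ 2 / (z ^ 2 - 1))

/-- `φ N d z = 1/d² + (1 - z/N)/(z² - 1)²`. -/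
noncomputable def phi (N d z : ℝ) : ℝ := 1 / d ^ 2 + (1 - z / N) / (z ^ 2 - 1) ^ 2

/-- The interval `I₂ = (1, √(1+d²))`. -/
noncomputable def I₂ (d : ℝ) : Set ℝ := Set.Ioo 1 (Real.sqrt (1 + d ^ 2))

/-!
Clearing denominators, both `φ = 0` and the sign of `F'` on `z > 1` are governed by the quartic
`g z = N (z² - 1)² + d² (N - z)`, which is strictly convex on `[1, ∞)`. It is positive at `1`
and at `√(1 + d²)`, and the hypothesis on `d²` makes it negative at the minimiser `p` of
`N (z² - 1)² / (z - N)`. So `g` has exactly two zeros `z₀₂ < z₀₃` in `I₂`, `F'` has the signs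
`+, -, +` around them, and `F` decreases between them. Finally `F < 0` on `I₂` because there
`z² - 1 < d²`.
-/

open Set

section StrictConvex

variable {s : Set ℝ} {f : ℝ → ℝ} {a c z : ℝ}

theorem StrictConvexOn.neg_of_mem_Ioo_of_eq_zero (hf : StrictConvexOn ℝ s f) (ha : a ∈ s)
    (hc : c ∈ s) (hfa : f a = 0) (hfc : f c = 0) (hz : z ∈ Ioo a c) : f z < 0 := by
  have hac : a < c := hz.1.trans hz.2
  simpa [hfa, hfc] using
    hf.lt_on_openSegment ha hc hac.ne (by rwa [openSegment_eq_Ioo hac])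

theorem StrictConvexOn.pos_of_lt_of_eq_zero (hf : StrictConvexOn ℝ s f) (hz : z ∈ s)
    (hc : c ∈ s) (hza : z < a) (hac : a < c) (hfa : f a = 0) (hfc : f c = 0) : 0 < f z := by
  have h := hf.slope_strict_mono_adjacent hz hc hza hac
  rw [hfa, hfc, sub_self, zero_div, zero_sub, neg_div, neg_lt_zero] at h
  exact (div_pos_iff_of_pos_right (sub_pos.2 hza)).1 h

theorem StrictConvexOn.pos_of_gt_of_eq_zero (hf : StrictConvexOn ℝ s f) (ha : a ∈ s)
    (hz : z ∈ s) (hac : a < c) (hcz : c < z) (hfa : f a = 0) (hfc : f c = 0) : 0 < f z := by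
  have h := hf.slope_strict_mono_adjacent ha hz hac hcz
  rw [hfa, hfc, sub_self, zero_div, sub_zero] at h
  exact (div_pos_iff_of_pos_right (sub_pos.2 hcz)).1 h

theorem StrictConvexOn.eq_or_eq_of_eq_zero (hf : StrictConvexOn ℝ s f) (ha : a ∈ s) (hc : c ∈ s)
    (hac : a < c) (hfa : f a = 0) (hfc : f c = 0) (hz : z ∈ s) (hfz : f z = 0) :
    z = a ∨ z = c := by
  rcases lt_trichotomy z a with hza | rfl | hza
  · exact absurd hfz (hf.pos_of_lt_of_eq_zero hz hc hza hac hfa hfc).ne'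
  · exact Or.inl rfl
  rcases lt_trichotomy z c with hzc | rfl | hzc
  · exact absurd hfz (hf.neg_of_mem_Ioo_of_eq_zero ha hc hfa hfc ⟨hza, hzc⟩).ne
  · exact Or.inr rfl
  · exact absurd hfz (hf.pos_of_gt_of_eq_zero ha hz hac hzc hfa hfc).ne'

end StrictConvex

/-- Numerator of `φ`: `φ = phiNum / (N d² (z² - 1)²)` and `F' = 2 (N z - 1) phiNum / (z² - 1)²`. -/
noncomputable def phiNum (N d z : ℝ) : ℝ := N * (z ^ 2 - 1) ^ 2 + d ^ 2 * (N - z)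

/-- The root `p > N` of `3 z² - 4 N z + 1`, which minimises `N (z² - 1)² / (z - N)` over
`z > N`. The minimum is `4 N p (p² - 1)`, so the hypothesis on `d²` says `phiNum` is negative
at `p`. -/
noncomputable def zCrit (N : ℝ) : ℝ := (2 * N + √(4 * N ^ 2 - 3)) / 3

section

variable {N d z : ℝ}

theorem continuous_phiNum : Continuous (phiNum N d) := by
  unfold phiNum
  fun_prop

theorem phi_eq_zero_iff (hN : N ≠ 0) (hd : d ≠ 0) (hz : z ^ 2 - 1 ≠ 0) :
    phi N d z = 0 ↔ phiNum N d z = 0 := by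
  have hphi : phi N d z = phiNum N d z / (N * d ^ 2 * (z ^ 2 - 1) ^ 2) := by
    unfold phi phiNum
    field_simp
  rw [hphi, div_eq_zero_iff]
  simp [hN, hd, hz]

theorem hasDerivAt_F (hz : z ^ 2 - 1 ≠ 0) :
    HasDerivAt (F N d) (2 * (N * z - 1) / (z ^ 2 - 1) ^ 2 * phiNum N d z) z := by
  have hlin : HasDerivAt (fun z : ℝ => (1 - N * z) ^ 2) (2 * (1 - N * z) ^ 1 * (-N)) z := by
    simpa using (((hasDerivAt_id z).const_mul N).const_sub 1).fun_pow 2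
  have hden : HasDerivAt (fun z : ℝ => z ^ 2 - 1) (2 * z) z := by
    simpa using (hasDerivAt_pow 2 z).sub_const 1
  have hfrac : HasDerivAt (fun z : ℝ => 1 - d ^ 2 / (z ^ 2 - 1))
      (-((0 * (z ^ 2 - 1) - d ^ 2 * (2 * z)) / (z ^ 2 - 1) ^ 2)) z :=
    ((hasDerivAt_const z (d ^ 2)).div hden hz).const_sub 1
  refine (hlin.fun_mul hfrac).congr_deriv ?_
  unfold phiNum
  field_simp
  ring

theorem differentiableOn_F : DifferentiableOn ℝ (F N d) (Ioi 1) := fun z hz =>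
  (hasDerivAt_F (by nlinarith [mem_Ioi.1 hz])).differentiableAt.differentiableWithinAt

theorem deriv_F_pos (hN : 1 ≤ N) (hz : 1 < z) (hg : 0 < phiNum N d z) :
    0 < deriv (F N d) z := by
  rw [(hasDerivAt_F (by nlinarith)).deriv]
  have : 0 < N * z - 1 := by nlinarith
  have : 0 < z ^ 2 - 1 := by nlinarith
  positivity

theorem deriv_F_neg (hN : 1 ≤ N) (hz : 1 < z) (hg : phiNum N d z < 0) :
    deriv (F N d) z < 0 := by
  rw [(hasDerivAt_F (by nlinarith)).deriv]
  have : 0 < N * z - 1 := by nlinarith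
  have : 0 < z ^ 2 - 1 := by nlinarith
  exact mul_neg_of_pos_of_neg (by positivity) hg

variable {a b c : ℝ}

theorem isLocalMax_F (hN : 1 ≤ N) (ha : 1 ≤ a) (hab : a < b) (hbc : b < c)
    (hpos : ∀ z ∈ Ioo a b, 0 < phiNum N d z) (hneg : ∀ z ∈ Ioo b c, phiNum N d z < 0) :
    IsLocalMax (F N d) b :=
  isLocalMax_of_deriv_Ioo hab hbc
    (differentiableOn_F.differentiableAt (Ioi_mem_nhds (ha.trans_lt hab))).continuousAt
    (differentiableOn_F.mono fun _ hz => ha.trans_lt hz.1)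
    (differentiableOn_F.mono fun _ hz => ha.trans_lt (hab.trans hz.1))
    (fun z hz => (deriv_F_pos hN (ha.trans_lt hz.1) (hpos z hz)).le)
    (fun z hz => (deriv_F_neg hN (ha.trans_lt (hab.trans hz.1)) (hneg z hz)).le)

theorem isLocalMin_F (hN : 1 ≤ N) (ha : 1 ≤ a) (hab : a < b) (hbc : b < c)
    (hneg : ∀ z ∈ Ioo a b, phiNum N d z < 0) (hpos : ∀ z ∈ Ioo b c, 0 < phiNum N d z) :
    IsLocalMin (F N d) b :=
  isLocalMin_of_deriv_Ioo hab hbc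
    (differentiableOn_F.differentiableAt (Ioi_mem_nhds (ha.trans_lt hab))).continuousAt
    (differentiableOn_F.mono fun _ hz => ha.trans_lt hz.1)
    (differentiableOn_F.mono fun _ hz => ha.trans_lt (hab.trans hz.1))
    (fun z hz => (deriv_F_neg hN (ha.trans_lt hz.1) (hneg z hz)).le)
    (fun z hz => (deriv_F_pos hN (ha.trans_lt (hab.trans hz.1)) (hpos z hz)).le)

theorem strictAntiOn_F (hN : 1 ≤ N) (ha : 1 < a) (hneg : ∀ z ∈ Ioo a b, phiNum N d z < 0) :
    StrictAntiOn (F N d) (Icc a b) := by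
  refine strictAntiOn_of_deriv_neg (convex_Icc a b)
    (differentiableOn_F.continuousOn.mono fun z hz => ha.trans_le hz.1) fun z hz => ?_
  rw [interior_Icc] at hz
  exact deriv_F_neg hN (ha.trans hz.1) (hneg z hz)

theorem F_neg (hN : 1 ≤ N) (hz : z ∈ I₂ d) : F N d z < 0 := by
  obtain ⟨hz1, hzM⟩ := hz
  have hz2 : 0 < z ^ 2 - 1 := by nlinarith
  have hzd : z ^ 2 - 1 < d ^ 2 := by
    have := (Real.lt_sqrt (by linarith)).1 hzM
    linarith
  have hNz : 0 < (1 - N * z) ^ 2 := sq_pos_of_neg (by nlinarith)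
  refine mul_neg_of_pos_of_neg hNz ?_
  rw [sub_neg, lt_div_iff₀ hz2]
  linarith

theorem strictConvexOn_phiNum (hN : 0 < N) : StrictConvexOn ℝ (Ici 1) (phiNum N d) := by
  refine strictConvexOn_iff_slope_strict_mono_adjacent.2 ⟨convex_Ici 1, ?_⟩
  intro x y z hx hz hxy hyz
  rw [mem_Ici] at hx hz
  rw [div_lt_div_iff₀ (sub_pos.2 hxy) (sub_pos.2 hyz)]
  have hid : (phiNum N d z - phiNum N d y) * (y - x) - (phiNum N d y - phiNum N d x) * (z - y)
      = (y - x) * (z - y) * (z - x) *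
        (N * (x ^ 2 + y ^ 2 + z ^ 2 + x * y + x * z + y * z - 2)) := by
    unfold phiNum
    ring
  have hQ : 0 < N * (x ^ 2 + y ^ 2 + z ^ 2 + x * y + x * z + y * z - 2) :=
    mul_pos hN (by nlinarith)
  have := mul_pos (mul_pos (mul_pos (sub_pos.2 hxy) (sub_pos.2 hyz)) (by linarith : 0 < z - x)) hQ
  linarith

theorem phiNum_sqrt_one_add_sq_pos (hN : 1 ≤ N) (hd : d ≠ 0) : 0 < phiNum N d √(1 + d ^ 2) := by
  have hd2 : 0 < d ^ 2 := by positivity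
  have hM2 : √(1 + d ^ 2) ^ 2 = 1 + d ^ 2 := Real.sq_sqrt (by positivity)
  have hM1 : 1 < √(1 + d ^ 2) := Real.lt_sqrt_of_sq_lt (by linarith)
  have hval : phiNum N d √(1 + d ^ 2) = d ^ 2 * (N * (1 + d ^ 2) - √(1 + d ^ 2)) := by
    unfold phiNum
    rw [hM2]
    ring
  rw [hval]
  exact mul_pos hd2 (by nlinarith)

theorem zCrit_isRoot (hN : 3 ≤ 4 * N ^ 2) : 3 * zCrit N ^ 2 - 4 * N * zCrit N + 1 = 0 := by
  unfold zCrit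
  linear_combination Real.sq_sqrt (by linarith : 0 ≤ 4 * N ^ 2 - 3) / 3

theorem lt_zCrit (hN : 1 < N) : N < zCrit N := by
  have hs : N < √(4 * N ^ 2 - 3) := Real.lt_sqrt_of_sq_lt (by nlinarith)
  unfold zCrit
  linarith

theorem threshold_eq_zCrit (hN : 0 < N) (h3 : 3 ≤ 4 * N ^ 2) :
    (16 * N ^ 2 / 27) * ((8 * N ^ 2 - 6) * √(1 - 3 / (4 * N ^ 2)) + 8 * N ^ 2 - 9)
      = 4 * N * zCrit N * (zCrit N ^ 2 - 1) := by
  have hs2 : √(4 * N ^ 2 - 3) ^ 2 = 4 * N ^ 2 - 3 := Real.sq_sqrt (by linarith)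
  have hsqrt : √(1 - 3 / (4 * N ^ 2)) = √(4 * N ^ 2 - 3) / (2 * N) := by
    rw [← Real.sqrt_sq (by positivity : 0 ≤ 2 * N), ← Real.sqrt_div' _ (by positivity)]
    congr 1
    field_simp
    ring
  rw [hsqrt]
  unfold zCrit
  generalize √(4 * N ^ 2 - 3) = s at hs2 ⊢
  field_simp
  linear_combination (-1296 * N - 216 * s) * hs2

theorem phiNum_zCrit (h3 : 3 ≤ 4 * N ^ 2) :
    phiNum N d (zCrit N) = (zCrit N - N) * (4 * N * zCrit N * (zCrit N ^ 2 - 1) - d ^ 2) := by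
  unfold phiNum
  linear_combination (-(N * (zCrit N ^ 2 - 1))) * zCrit_isRoot h3

theorem exists_phiNum_eq_zero (hN : 1 < N) (hd : 0 < d)
    (hcase : (16 * N ^ 2 / 27) *
        ((8 * N ^ 2 - 6) * √(1 - 3 / (4 * N ^ 2)) + 8 * N ^ 2 - 9) < d ^ 2) :
    ∃ a c, 1 < a ∧ a < c ∧ c < √(1 + d ^ 2) ∧ phiNum N d a = 0 ∧ phiNum N d c = 0 := by
  have h3 : 3 ≤ 4 * N ^ 2 := by nlinarith
  have hpN := lt_zCrit hN
  have hp1 : 1 < zCrit N := hN.trans hpN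
  rw [threshold_eq_zCrit (by linarith) h3] at hcase
  have hgp : phiNum N d (zCrit N) < 0 := by
    rw [phiNum_zCrit h3]
    exact mul_neg_of_pos_of_neg (sub_pos.2 hpN) (sub_neg.2 hcase)
  have hpM : zCrit N < √(1 + d ^ 2) := by
    refine Real.lt_sqrt_of_sq_lt ?_
    nlinarith [mul_pos (by nlinarith : 0 < 4 * N * zCrit N - 1) (by nlinarith : 0 < zCrit N ^ 2 - 1)]
  have hg1 : 0 < phiNum N d 1 := by
    have : 0 < d ^ 2 * (N - 1) := mul_pos (by positivity) (by linarith)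
    simpa [phiNum] using this
  obtain ⟨a, ⟨ha1, hap⟩, hga⟩ :=
    intermediate_value_Ioo' hp1.le continuous_phiNum.continuousOn ⟨hgp, hg1⟩
  obtain ⟨c, ⟨hpc, hcM⟩, hgc⟩ := intermediate_value_Ioo hpM.le continuous_phiNum.continuousOn
    ⟨hgp, phiNum_sqrt_one_add_sq_pos hN.le hd.ne'⟩
  exact ⟨a, c, ha1, hap.trans hpc, hcM, hga, hgc⟩

end

/-- For `N > 1` and `d² > (16N²/27)((8N² - 6)√(1 - 3/(4N²)) + 8N² - 9)`, the equation
`φ(z) = 0` has exactly two roots `z₀₂ < z₀₃` in `I₂`; `F` has a local maximum at `z₀₂`,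
a local minimum at `z₀₃`, and `F(z₀₃) < F(z₀₂) < 0`. -/
theorem stmt_14 (N d : ℝ) (hN : 1 < N) (hd : 0 < d)
    (hcase : (16 * N ^ 2 / 27) *
        ((8 * N ^ 2 - 6) * Real.sqrt (1 - 3 / (4 * N ^ 2)) + 8 * N ^ 2 - 9)
      < d ^ 2) :
    ∃ z₀₂ z₀₃ : ℝ, z₀₂ < z₀₃ ∧ z₀₂ ∈ I₂ d ∧ z₀₃ ∈ I₂ d ∧
      phi N d z₀₂ = 0 ∧ phi N d z₀₃ = 0 ∧
      (∀ z ∈ I₂ d, phi N d z = 0 → z = z₀₂ ∨ z = z₀₃) ∧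
      IsLocalMax (F N d) z₀₂ ∧ IsLocalMin (F N d) z₀₃ ∧
      F N d z₀₃ < F N d z₀₂ ∧ F N d z₀₂ < 0 := by
  obtain ⟨a, c, ha1, hac, hcM, hga, hgc⟩ := exists_phiNum_eq_zero hN hd hcase
  have hconv := strictConvexOn_phiNum (N := N) (d := d) (by linarith)
  have ha : a ∈ Ici 1 := ha1.le
  have hc1 : 1 < c := ha1.trans hac
  have hc : c ∈ Ici 1 := hc1.le
  have hposL : ∀ z ∈ Ioo 1 a, 0 < phiNum N d z := fun z hz =>
    hconv.pos_of_lt_of_eq_zero hz.1.le hc hz.2 hac hga hgc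
  have hneg : ∀ z ∈ Ioo a c, phiNum N d z < 0 := fun z hz =>
    hconv.neg_of_mem_Ioo_of_eq_zero ha hc hga hgc hz
  have hposR : ∀ z ∈ Ioo c (c + 1), 0 < phiNum N d z := fun z hz =>
    hconv.pos_of_gt_of_eq_zero ha (mem_Ici.2 (hc.trans hz.1.le)) hac hz.1 hga hgc
  have hroot : ∀ z ∈ Ioi 1, phi N d z = 0 ↔ phiNum N d z = 0 := fun z hz =>
    phi_eq_zero_iff (by linarith) hd.ne' (by nlinarith [mem_Ioi.1 hz])
  have haI : a ∈ I₂ d := ⟨ha1, hac.trans hcM⟩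
  refine ⟨a, c, hac, haI, ⟨hc1, hcM⟩, (hroot a ha1).2 hga, (hroot c hc1).2 hgc,
    fun z hz hphi => ?_, isLocalMax_F hN.le le_rfl ha1 hac hposL hneg,
    isLocalMin_F hN.le ha1.le hac (lt_add_one c) hneg hposR,
    strictAntiOn_F hN.le ha1 hneg (left_mem_Icc.2 hac.le) (right_mem_Icc.2 hac.le) hac,
    F_neg hN.le haI⟩
  exact hconv.eq_or_eq_of_eq_zero ha hc hac hga hgc (mem_Ici.2 hz.1.le)
    ((hroot z hz.1).1 hphi)
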